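/- arXiv:2308.16736 — 5 statements merged into one kernel-verified Lean document; each statement's English description precedes it below -/
import Mathlib

section
/- Let E, Q, J, R be real n×n matrices with EᵀQ = QᵀE, Jᵀ = −J, R = Rᵀ positive semidefinite, and Q symmetric positive definite; let B be a real n×m matrix and u : ℝ → ℝᵐ continuous. Let ε > 0, set E_ε = E + εI, and let x_ε : ℝ → ℝⁿ be continuously differentiable with E_ε x_ε'(t) = (J − R) Q x_ε(t) + B u(t) for all t. Set H(ξ) = ½ ξᵀ Qᵀ E ξ and y_ε(t) = Bᵀ Q x_ε(t). Then for all t₀ ∈ ℝ and h ≥ 0: H(x_ε(t₀ + h)) − H(x_ε(t₀)) ≤ ∫_{t₀}^{t₀+h} y_ε(s)ᵀ u(s) ds + (ε/2) | x_ε(t₀+h)ᵀ Q x_ε(t₀+h) − x_ε(t₀)ᵀ Q x_ε(t₀) |. -/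
/-!
The regularized system is again port-Hamiltonian, because `Qᵀ(E + εI) = QᵀE + εQ` is symmetric.
Along any of its trajectories, `J` being skew and `R` positive semidefinite give
`d/dt H_ε(x) = (Qx)ᵀ E_ε x' = yᵀu - (Qx)ᵀ R (Qx) ≤ yᵀu`, and integrating this yields the
dissipation inequality for `H_ε`. Finally, `H = H_ε - (ε/2) ξᵀQξ`, so the change of `H`
differs from that of `H_ε` by at most `(ε/2)` times the change of `ξᵀQξ` in absolute value.
-/

open Matrix

section Calculus

variable {𝕜 ι : Type*} [RCLike 𝕜] [Fintype ι]
  {f g : 𝕜 → ι → 𝕜} {f' g' : ι → 𝕜} {t : 𝕜}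

theorem HasDerivAt.dotProduct (hf : HasDerivAt f f' t) (hg : HasDerivAt g g' t) :
    HasDerivAt (fun s => f s ⬝ᵥ g s) (f' ⬝ᵥ g t + f t ⬝ᵥ g') t := by
  have hfg : ∀ i ∈ Finset.univ, HasDerivAt (fun s => f s i * g s i)
      (f' i * g t i + f t i * g' i) t := fun i _ =>
    (hasDerivAt_pi.1 hf i).mul (hasDerivAt_pi.1 hg i)
  have hsum := HasDerivAt.fun_sum hfg
  rw [Finset.sum_add_distrib] at hsum
  exact hsum

theorem HasDerivAt.const_mulVec (M : Matrix ι ι 𝕜) (hf : HasDerivAt f f' t) :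
    HasDerivAt (fun s => M *ᵥ f s) (M *ᵥ f') t :=
  M.mulVecLin.toContinuousLinearMap.hasFDerivAt.comp_hasDerivAt t hf

theorem HasDerivAt.dotProduct_mulVec_self {M : Matrix ι ι 𝕜} (hM : Mᵀ = M)
    (hf : HasDerivAt f f' t) :
    HasDerivAt (fun s => f s ⬝ᵥ M *ᵥ f s) (2 * (f t ⬝ᵥ M *ᵥ f')) t := by
  convert hf.dotProduct (hf.const_mulVec M) using 1
  rw [two_mul, ← dotProduct_transpose_mulVec, hM]

end Calculus

theorem dotProduct_mulVec_self_eq_zero_of_transpose_eq_neg {ι : Type*} [Fintype ι]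
    {J : Matrix ι ι ℝ} (hJ : Jᵀ = -J) (v : ι → ℝ) :
    v ⬝ᵥ J *ᵥ v = 0 := by
  have h := dotProduct_transpose_mulVec J v v
  rw [hJ, neg_mulVec, dotProduct_neg] at h
  linarith

namespace PortHamiltonian

variable {ι κ : Type*} [Fintype ι] [Fintype κ]

noncomputable def hamiltonian (Q E : Matrix ι ι ℝ) (ξ : ι → ℝ) : ℝ := 1 / 2 * (ξ ⬝ᵥ (Qᵀ * E) *ᵥ ξ)

theorem hamiltonian_add_smul_one [DecidableEq ι] (Q E : Matrix ι ι ℝ) (ε : ℝ) (ξ : ι → ℝ) :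
    hamiltonian Q (E + ε • 1) ξ = hamiltonian Q E ξ + ε / 2 * (ξ ⬝ᵥ Q *ᵥ ξ) := by
  simp only [hamiltonian, Matrix.mul_add, Matrix.mul_smul, Matrix.mul_one, add_mulVec,
    smul_mulVec, dotProduct_add, dotProduct_smul, smul_eq_mul, dotProduct_transpose_mulVec]
  ring

theorem power_le_supply_rate {J R : Matrix ι ι ℝ} (hJ : Jᵀ = -J)
    (hR : ∀ v : ι → ℝ, 0 ≤ v ⬝ᵥ R *ᵥ v) (B : Matrix ι κ ℝ) (e : ι → ℝ) (v : κ → ℝ) :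
    e ⬝ᵥ ((J - R) *ᵥ e + B *ᵥ v) ≤ Bᵀ *ᵥ e ⬝ᵥ v := by
  rw [dotProduct_add, sub_mulVec, dotProduct_sub, dotProduct_mulVec_self_eq_zero_of_transpose_eq_neg hJ,
    dotProduct_mulVec e B, ← mulVec_transpose]
  linarith [hR e]

theorem hasDerivAt_hamiltonian {Q E : Matrix ι ι ℝ} (hEQ : Eᵀ * Q = Qᵀ * E)
    {x : ℝ → ι → ℝ} {x' : ι → ℝ} {t : ℝ} (hx : HasDerivAt x x' t) :
    HasDerivAt (fun s => hamiltonian Q E (x s)) (Q *ᵥ x t ⬝ᵥ E *ᵥ x') t := by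
  have hsymm : (Qᵀ * E)ᵀ = Qᵀ * E := by rw [transpose_mul, transpose_transpose, hEQ]
  refine ((hx.dotProduct_mulVec_self hsymm).const_mul (1 / 2)).congr_deriv ?_
  rw [← mulVec_mulVec, dotProduct_transpose_mulVec, dotProduct_comm]
  ring

theorem hamiltonian_sub_le_integral {E Q J R : Matrix ι ι ℝ} {B : Matrix ι κ ℝ}
    (hEQ : Eᵀ * Q = Qᵀ * E) (hJ : Jᵀ = -J) (hR : ∀ v : ι → ℝ, 0 ≤ v ⬝ᵥ R *ᵥ v)
    {u : ℝ → κ → ℝ} (hu : Continuous u) {x x' : ℝ → ι → ℝ} (hx : ∀ t, HasDerivAt x (x' t) t)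
    (hsys : ∀ t, E *ᵥ x' t = (J - R) *ᵥ (Q *ᵥ x t) + B *ᵥ u t) {a b : ℝ} (hab : a ≤ b) :
    hamiltonian Q E (x b) - hamiltonian Q E (x a) ≤ ∫ s in a..b, Bᵀ *ᵥ (Q *ᵥ x s) ⬝ᵥ u s := by
  have hxc : Continuous x := continuous_iff_continuousAt.2 fun t => (hx t).continuousAt
  have hyu : Continuous fun s => Bᵀ *ᵥ (Q *ᵥ x s) ⬝ᵥ u s :=
    (continuous_const.matrix_mulVec (continuous_const.matrix_mulVec hxc)).dotProduct hu
  refine intervalIntegral.sub_le_integral_of_hasDeriv_right_of_le hab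
    (fun t _ => (hasDerivAt_hamiltonian hEQ (hx t)).continuousAt.continuousWithinAt)
    (fun t _ => (hasDerivAt_hamiltonian hEQ (hx t)).hasDerivWithinAt)
    hyu.integrableOn_Icc (fun t _ => ?_)
  rw [hsys t]
  exact power_le_supply_rate hJ hR B _ _

end PortHamiltonian

open PortHamiltonian in
theorem phs_eps_regularized_dissipativity_general {n m : ℕ}
    (E Q J R : Matrix (Fin n) (Fin n) ℝ) (B : Matrix (Fin n) (Fin m) ℝ)
    (hEQ : Eᵀ * Q = Qᵀ * E) (hJ : Jᵀ = -J)
    (hRpsd : ∀ v : Fin n → ℝ, 0 ≤ v ⬝ᵥ R.mulVec v)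
    (hQsym : Qᵀ = Q)
    (u : ℝ → Fin m → ℝ) (hu : Continuous u)
    (ε : ℝ) (hε : 0 < ε)
    (Eε : Matrix (Fin n) (Fin n) ℝ) (hEε : Eε = E + ε • (1 : Matrix (Fin n) (Fin n) ℝ))
    (xε xε' : ℝ → Fin n → ℝ)
    (hx : ∀ t : ℝ, HasDerivAt xε (xε' t) t)
    (hsys : ∀ t : ℝ, Eε.mulVec (xε' t) = (J - R).mulVec (Q.mulVec (xε t)) + B.mulVec (u t))
    (H : (Fin n → ℝ) → ℝ)
    (hH : H = fun ξ => (1 / 2 : ℝ) * (ξ ⬝ᵥ (Qᵀ * E).mulVec ξ))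
    (yε : ℝ → Fin m → ℝ)
    (hy : yε = fun t => Bᵀ.mulVec (Q.mulVec (xε t))) :
    ∀ t₀ h : ℝ, 0 ≤ h →
      H (xε (t₀ + h)) - H (xε t₀) ≤
        (∫ s in t₀..(t₀ + h), yε s ⬝ᵥ u s) +
          (ε / 2) * |xε (t₀ + h) ⬝ᵥ Q.mulVec (xε (t₀ + h)) - xε t₀ ⬝ᵥ Q.mulVec (xε t₀)| := by
  intro t₀ h hh
  have hEεQ : Eεᵀ * Q = Qᵀ * Eε := by
    rw [hEε, transpose_add, transpose_smul, transpose_one, add_mul, mul_add, hEQ, hQsym,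
      smul_mul_assoc, one_mul, mul_smul_comm, mul_one]
  have hdiss :=
    hamiltonian_sub_le_integral hEεQ hJ hRpsd hu hx hsys (a := t₀) (le_add_of_nonneg_right hh)
  rw [hEε, hamiltonian_add_smul_one, hamiltonian_add_smul_one] at hdiss
  have hHQE : H = hamiltonian Q E := hH
  subst hHQE hy
  have hquad := mul_le_mul_of_nonneg_left
    (neg_le_abs (xε (t₀ + h) ⬝ᵥ Q *ᵥ xε (t₀ + h) - xε t₀ ⬝ᵥ Q *ᵥ xε t₀)) (half_pos hε).le
  linarith

/-- Approximate dissipativity for the ε-regularized port-Hamiltonian system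
`E_ε x_ε' = (J - R) Q x_ε + B u` with `E_ε = E + εI`:  the original Hamiltonian
`H(ξ) = ½ ξᵀ Qᵀ E ξ` along the perturbed solution satisfies
`H(x_ε(t₀+h)) - H(x_ε(t₀)) ≤ ∫ y_εᵀ u + (ε/2)|x_ε(t₀+h)ᵀ Q x_ε(t₀+h) - x_ε(t₀)ᵀ Q x_ε(t₀)|`. -/
theorem phs_eps_regularized_dissipativity {n m : ℕ}
    (E Q J R : Matrix (Fin n) (Fin n) ℝ) (B : Matrix (Fin n) (Fin m) ℝ)
    (hEQ : Eᵀ * Q = Qᵀ * E) (hJ : Jᵀ = -J) (hRsym : Rᵀ = R)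
    (hRpsd : ∀ v : Fin n → ℝ, 0 ≤ v ⬝ᵥ R.mulVec v)
    (hQsym : Qᵀ = Q) (hQpd : ∀ v : Fin n → ℝ, v ≠ 0 → 0 < v ⬝ᵥ Q.mulVec v)
    (u : ℝ → Fin m → ℝ) (hu : Continuous u)
    (ε : ℝ) (hε : 0 < ε)
    (Eε : Matrix (Fin n) (Fin n) ℝ) (hEε : Eε = E + ε • (1 : Matrix (Fin n) (Fin n) ℝ))
    (xε xε' : ℝ → Fin n → ℝ)
    (hx : ∀ t : ℝ, HasDerivAt xε (xε' t) t) (hx' : Continuous xε')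
    (hsys : ∀ t : ℝ, Eε.mulVec (xε' t) = (J - R).mulVec (Q.mulVec (xε t)) + B.mulVec (u t))
    (H : (Fin n → ℝ) → ℝ)
    (hH : H = fun ξ => (1 / 2 : ℝ) * (ξ ⬝ᵥ (Qᵀ * E).mulVec ξ))
    (yε : ℝ → Fin m → ℝ)
    (hy : yε = fun t => Bᵀ.mulVec (Q.mulVec (xε t))) :
    ∀ t₀ h : ℝ, 0 ≤ h →
      H (xε (t₀ + h)) - H (xε t₀) ≤
        (∫ s in t₀..(t₀ + h), yε s ⬝ᵥ u s) +
          (ε / 2) * |xε (t₀ + h) ⬝ᵥ Q.mulVec (xε (t₀ + h)) - xε t₀ ⬝ᵥ Q.mulVec (xε t₀)| :=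
  phs_eps_regularized_dissipativity_general E Q J R B hEQ hJ hRpsd hQsym u hu ε hε Eε hEε xε xε' hx
    hsys H hH yε hy
end

section
/- Let A and B be real n×n matrices and T > 0. There exists a constant C ≥ 0 such that for every positive integer N, with step size h = T/N, the Strang splitting with exact subflows is second-order convergent: ‖(exp((h/2)A) · exp(hB) · exp((h/2)A))^N − exp(T(A+B))‖ ≤ C/N². -/
/-!
The Strang step `S(h) = exp((h/2)A) exp(hB) exp((h/2)A)` and `exp(h(A+B))` are smooth in `h` and
have the same 2-jet at `h = 0`: for a product of three exponential curves the second derivative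
at `0` is the square of the total generator plus commutator terms, which cancel for a symmetric
product. Taylor's theorem then bounds the local error by `C h³` on `[0, T]`. Telescoping
`aᴺ - bᴺ` with `‖a‖, ‖b‖ ≤ exp(h(‖A‖ + ‖B‖))` adds up `N` local errors with growth at most
`exp(T(‖A‖ + ‖B‖))`, so the global error is `O(N · (T/N)³) = O(1/N²)`.
-/

open Matrix NormedSpace

attribute [local instance] Matrix.linftyOpNormedRing Matrix.linftyOpNormedAlgebra

open Set

theorem exists_norm_sub_le_mul_pow_of_iteratedDeriv_eq {E : Type*} [NormedAddCommGroup E]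
    [NormedSpace ℝ E] {f g : ℝ → E} {n : ℕ} (hf : ContDiff ℝ (n + 1) f)
    (hg : ContDiff ℝ (n + 1) g) (hfg : ∀ k ≤ n, iteratedDeriv k f 0 = iteratedDeriv k g 0)
    {T : ℝ} (hT : 0 < T) :
    ∃ C, 0 ≤ C ∧ ∀ x ∈ Icc 0 T, ‖f x - g x‖ ≤ C * x ^ (n + 1) := by
  have hjet : taylorWithinEval f n (Icc 0 T) 0 = taylorWithinEval g n (Icc 0 T) 0 := by
    ext x
    have h0 : (0 : ℝ) ∈ Icc 0 T := left_mem_Icc.2 hT.le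
    simp only [taylor_within_apply]
    refine Finset.sum_congr rfl fun k hk => ?_
    have hkn : (k : WithTop ℕ∞) ≤ n + 1 := by
      exact_mod_cast (Finset.mem_range.1 hk).le
    rw [iteratedDerivWithin_eq_iteratedDeriv (uniqueDiffOn_Icc hT) (hf.contDiffAt.of_le hkn) h0,
      iteratedDerivWithin_eq_iteratedDeriv (uniqueDiffOn_Icc hT) (hg.contDiffAt.of_le hkn) h0,
      hfg k (Nat.lt_succ_iff.1 (Finset.mem_range.1 hk))]
  obtain ⟨Cf, hCf⟩ := exists_taylor_mean_remainder_bound hT.le hf.contDiffOn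
  obtain ⟨Cg, hCg⟩ := exists_taylor_mean_remainder_bound hT.le hg.contDiffOn
  refine ⟨max Cf 0 + max Cg 0, by positivity, fun x hx => ?_⟩
  have hx3 : 0 ≤ x ^ (n + 1) := pow_nonneg hx.1 _
  calc ‖f x - g x‖
      ≤ ‖f x - taylorWithinEval f n (Icc 0 T) 0 x‖
        + ‖g x - taylorWithinEval g n (Icc 0 T) 0 x‖ := by
        rw [hjet, norm_sub_rev (g x)]; exact norm_sub_le_norm_sub_add_norm_sub _ _ _
    _ ≤ Cf * x ^ (n + 1) + Cg * x ^ (n + 1) := by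
        simpa only [sub_zero] using add_le_add (hCf x hx) (hCg x hx)
    _ ≤ (max Cf 0 + max Cg 0) * x ^ (n + 1) := by
        rw [add_mul]; gcongr <;> exact le_max_left _ _

section NormedRing

variable {R : Type*} [NormedRing R] [NormOneClass R]

theorem norm_pow_sub_pow_le {a b : R} {K : ℝ} (ha : ‖a‖ ≤ K) (hb : ‖b‖ ≤ K) (N : ℕ) :
    ‖a ^ N - b ^ N‖ ≤ N * K ^ (N - 1) * ‖a - b‖ := by
  induction N with
  | zero => simp
  | succ N ih =>
    have hK : 0 ≤ K := (norm_nonneg a).trans ha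
    have hpow : ‖a ^ N‖ ≤ K ^ N := (norm_pow_le a N).trans (pow_le_pow_left₀ (norm_nonneg a) ha N)
    have hK1 : (N : ℝ) * K ^ (N - 1) * K = N * K ^ N := by
      rcases N with _ | N
      · simp
      · simp [pow_succ, mul_assoc]
    calc ‖a ^ (N + 1) - b ^ (N + 1)‖ = ‖a ^ N * (a - b) + (a ^ N - b ^ N) * b‖ := by
          congr 1; noncomm_ring
      _ ≤ ‖a ^ N‖ * ‖a - b‖ + ‖a ^ N - b ^ N‖ * ‖b‖ :=
          (norm_add_le _ _).trans (add_le_add (norm_mul_le _ _) (norm_mul_le _ _))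
      _ ≤ K ^ N * ‖a - b‖ + N * K ^ (N - 1) * ‖a - b‖ * K := by gcongr
      _ = (N + 1 : ℕ) * K ^ (N + 1 - 1) * ‖a - b‖ := by
          rw [mul_right_comm _ ‖a - b‖, hK1, Nat.add_sub_cancel]; push_cast; ring

end NormedRing

section BanachAlgebra

variable {𝔸 : Type*} [NormedRing 𝔸] [NormedAlgebra ℝ 𝔸]

theorem norm_exp_le_exp_norm [NormOneClass 𝔸] (x : 𝔸) : ‖exp x‖ ≤ Real.exp ‖x‖ := by
  rw [exp_eq_tsum ℝ, Real.exp_eq_exp_ℝ, exp_eq_tsum ℝ]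
  refine (norm_tsum_le_tsum_norm (norm_expSeries_summable' x)).trans <|
    Summable.tsum_le_tsum (fun n => ?_) (norm_expSeries_summable' x) (expSeries_summable' ‖x‖)
  rw [norm_smul, norm_inv, Real.norm_natCast, smul_eq_mul]
  gcongr
  exact norm_pow_le x n

theorem norm_exp_smul_le [NormOneClass 𝔸] (M : 𝔸) {t : ℝ} (ht : 0 ≤ t) :
    ‖exp (t • M)‖ ≤ Real.exp (t * ‖M‖) := by
  simpa [norm_smul, abs_of_nonneg ht] using norm_exp_le_exp_norm (t • M)

noncomputable def strangStep (A B : 𝔸) (h : ℝ) : 𝔸 :=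
  exp ((h / 2) • A) * exp (h • B) * exp ((h / 2) • A)

theorem strangStep_eq_half_smul (A B : 𝔸) :
    strangStep A B = fun h => exp (h • (2⁻¹ : ℝ) • A) * exp (h • B) * exp (h • (2⁻¹ : ℝ) • A) := by
  ext h
  simp only [strangStep, smul_smul, div_eq_mul_inv]

theorem norm_strangStep_le [NormOneClass 𝔸] (A B : 𝔸) {h : ℝ} (hh : 0 ≤ h) :
    ‖strangStep A B h‖ ≤ Real.exp (h * (‖A‖ + ‖B‖)) := by
  have hh2 : 0 ≤ h / 2 := by positivity
  calc ‖strangStep A B h‖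
      ≤ ‖exp ((h / 2) • A)‖ * ‖exp (h • B)‖ * ‖exp ((h / 2) • A)‖ :=
        (norm_mul_le _ _).trans (mul_le_mul_of_nonneg_right (norm_mul_le _ _) (norm_nonneg _))
    _ ≤ Real.exp (h / 2 * ‖A‖) * Real.exp (h * ‖B‖) * Real.exp (h / 2 * ‖A‖) := by
        gcongr <;> exact norm_exp_smul_le _ ‹_›
    _ = Real.exp (h * (‖A‖ + ‖B‖)) := by
        rw [← Real.exp_add, ← Real.exp_add]; ring_nf

variable [CompleteSpace 𝔸]

theorem contDiff_exp_smul (M : 𝔸) {n : WithTop ℕ∞} : ContDiff ℝ n fun t : ℝ => exp (t • M) :=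
  contDiff_iff_contDiffAt.2 fun t => (exp_analytic (t • M)).contDiffAt.comp t
    (contDiff_id.smul contDiff_const).contDiffAt

theorem hasDerivAt_exp_smul_mul_exp_smul_mul_exp_smul (P Q R : 𝔸) (t : ℝ) :
    HasDerivAt (fun t : ℝ => exp (t • P) * exp (t • Q) * exp (t • R))
      (P * (exp (t • P) * exp (t • Q) * exp (t • R)) + exp (t • P) * Q * exp (t • Q) * exp (t • R)
        + exp (t • P) * exp (t • Q) * exp (t • R) * R) t := by
  refine (((hasDerivAt_exp_smul_const' P t).mul (hasDerivAt_exp_smul_const' Q t)).mul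
    (hasDerivAt_exp_smul_const R t)).congr_deriv ?_
  simp only [Pi.mul_apply]
  noncomm_ring

theorem iteratedDeriv_two_exp_smul_mul_exp_smul_mul_exp_smul_zero (P Q R : 𝔸) :
    iteratedDeriv 2 (fun t : ℝ => exp (t • P) * exp (t • Q) * exp (t • R)) 0
      = (P + Q + R) ^ 2 + ⁅P, Q⁆ + ⁅P, R⁆ + ⁅Q, R⁆ := by
  rw [iteratedDeriv_succ, iteratedDeriv_one,
    funext (hasDerivAt_exp_smul_mul_exp_smul_mul_exp_smul P Q R · |>.deriv)]
  have hg := hasDerivAt_exp_smul_mul_exp_smul_mul_exp_smul P Q R 0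
  have hmid := (((hasDerivAt_exp_smul_const' P (0 : ℝ)).mul_const Q).mul
    (hasDerivAt_exp_smul_const' Q (0 : ℝ))).mul (hasDerivAt_exp_smul_const R (0 : ℝ))
  refine (((hg.const_mul P).add hmid).add (hg.mul_const R)).deriv.trans ?_
  simp only [Pi.mul_apply, zero_smul, exp_zero, one_mul, mul_one, Ring.lie_def]
  noncomm_ring

theorem iteratedDeriv_two_exp_smul_zero (M : 𝔸) :
    iteratedDeriv 2 (fun t : ℝ => exp (t • M)) 0 = M ^ 2 := by
  have hderiv : deriv (fun t : ℝ => exp (t • M)) = fun t => exp (t • M) * M :=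
    funext fun t => (hasDerivAt_exp_smul_const M t).deriv
  rw [iteratedDeriv_succ, iteratedDeriv_one, hderiv,
    ((hasDerivAt_exp_smul_const M (0 : ℝ)).mul_const M).deriv, zero_smul, exp_zero, one_mul, sq]

theorem contDiff_strangStep (A B : 𝔸) {n : WithTop ℕ∞} : ContDiff ℝ n (strangStep A B) := by
  rw [strangStep_eq_half_smul]
  exact ((contDiff_exp_smul _).mul (contDiff_exp_smul _)).mul (contDiff_exp_smul _)

theorem iteratedDeriv_strangStep_zero (A B : 𝔸) :
    ∀ k ≤ 2,
      iteratedDeriv k (strangStep A B) 0 = iteratedDeriv k (fun h : ℝ => exp (h • (A + B))) 0 := by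
  have hA : (2⁻¹ : ℝ) • A + B + (2⁻¹ : ℝ) • A = A + B := by module
  intro k hk
  rw [strangStep_eq_half_smul]
  interval_cases k
  · simp
  · rw [iteratedDeriv_one, iteratedDeriv_one,
      (hasDerivAt_exp_smul_mul_exp_smul_mul_exp_smul ((2⁻¹ : ℝ) • A) B ((2⁻¹ : ℝ) • A) 0).deriv,
      (hasDerivAt_exp_smul_const (A + B) (0 : ℝ)).deriv]
    simp only [zero_smul, exp_zero, one_mul, mul_one, hA]
  · rw [iteratedDeriv_two_exp_smul_mul_exp_smul_mul_exp_smul_zero, iteratedDeriv_two_exp_smul_zero,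
      hA]
    simp only [Ring.lie_def, sub_self, add_zero]
    abel

theorem exists_norm_strangStep_sub_exp_le (A B : 𝔸) {T : ℝ} (hT : 0 < T) :
    ∃ C, 0 ≤ C ∧ ∀ h ∈ Icc 0 T, ‖strangStep A B h - exp (h • (A + B))‖ ≤ C * h ^ 3 :=
  exists_norm_sub_le_mul_pow_of_iteratedDeriv_eq (contDiff_strangStep A B) (contDiff_exp_smul _)
    (iteratedDeriv_strangStep_zero A B) hT

theorem exists_norm_strangStep_pow_sub_exp_le [NormOneClass 𝔸] (A B : 𝔸) {T : ℝ} (hT : 0 < T) :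
    ∃ C, 0 ≤ C ∧ ∀ N : ℕ, 0 < N →
      ‖strangStep A B (T / N) ^ N - exp (T • (A + B))‖ ≤ C / (N : ℝ) ^ 2 := by
  obtain ⟨C, hC, hlocal⟩ := exists_norm_strangStep_sub_exp_le A B hT
  set R := ‖A‖ + ‖B‖
  refine ⟨C * T ^ 3 * Real.exp (T * R), by positivity, fun N hN => ?_⟩
  have hN : (0 : ℝ) < N := Nat.cast_pos.2 hN
  set h := T / N
  have hh : 0 ≤ h := by positivity
  have hNh : N * h = T := mul_div_cancel₀ T hN.ne'
  have hexp_pow : exp (T • (A + B)) = exp (h • (A + B)) ^ N := by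
    let +nondep : NormedAlgebra ℚ 𝔸 := .restrictScalars ℚ ℝ 𝔸
    rw [← NormedSpace.exp_nsmul, ← Nat.cast_smul_eq_nsmul ℝ, smul_smul, hNh]
  have hexp_le : ‖exp (h • (A + B))‖ ≤ Real.exp (h * R) :=
    (norm_exp_smul_le _ hh).trans <| Real.exp_le_exp.2 <|
      mul_le_mul_of_nonneg_left (norm_add_le A B) hh
  have hgrowth : Real.exp (h * R) ^ (N - 1) ≤ Real.exp (T * R) :=
    calc Real.exp (h * R) ^ (N - 1) ≤ Real.exp (h * R) ^ N :=
          pow_le_pow_right₀ (Real.one_le_exp (by positivity)) (N.sub_le 1)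
      _ = Real.exp (T * R) := by rw [← Real.exp_nat_mul, ← mul_assoc, hNh]
  rw [hexp_pow]
  calc ‖strangStep A B h ^ N - exp (h • (A + B)) ^ N‖
      ≤ N * Real.exp (h * R) ^ (N - 1) * ‖strangStep A B h - exp (h • (A + B))‖ :=
        norm_pow_sub_pow_le (norm_strangStep_le A B hh) hexp_le N
    _ ≤ N * Real.exp (T * R) * (C * h ^ 3) := by
        gcongr
        exact hlocal h ⟨hh, div_le_self hT.le (by exact_mod_cast hN)⟩
    _ = C * T ^ 3 * Real.exp (T * R) / (N : ℝ) ^ 2 := by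
        simp only [h]; field_simp

end BanachAlgebra

/-- Second-order global convergence of Strang splitting with exact subflows for
the linear system `x' = (A + B)x` on `[0, T]`:  with `h = T/N`,
`‖(exp((h/2)A)·exp(hB)·exp((h/2)A))^N - exp(T(A+B))‖ ≤ C / N²`. -/
theorem strang_second_order_convergence {n : ℕ}
    (A B : Matrix (Fin n) (Fin n) ℝ) (T : ℝ) (hT : 0 < T) :
    ∃ C : ℝ, 0 ≤ C ∧ ∀ N : ℕ, 0 < N →
      ‖(exp ((T / N / 2) • A) * exp ((T / N) • B) * exp ((T / N / 2) • A)) ^ N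
          - exp (T • (A + B))‖ ≤ C / (N : ℝ) ^ 2 := by
  -- `‖1‖ = 1` for the operator norm needs a nonempty index type; `0 × 0` matrices are trivial.
  rcases isEmpty_or_nonempty (Fin n) with hn | hn
  · exact ⟨0, le_rfl, fun N _ => by simp [Subsingleton.elim _ (0 : Matrix (Fin n) (Fin n) ℝ)]⟩
  · exact exists_norm_strangStep_pow_sub_exp_le A B hT
end

section
/- Let f₁, f₂ : ℝⁿ → ℝⁿ be twice continuously differentiable with f₁, f₂ and all their derivatives up to order 2 bounded on ℝⁿ. Let Φ₁, Φ₂, Φ : ℝ × ℝⁿ → ℝⁿ be the exact flows of x' = f₁(x), x' = f₂(x), and x' = f₁(x) + f₂(x) respectively, i.e., Φᵢ(0, ξ) = ξ, ∂_t Φᵢ(t, ξ) = fᵢ(Φᵢ(t, ξ)) for all t, ξ (and analogously for Φ with vector field f₁ + f₂). Then for every x₀ ∈ ℝⁿ there exist constants C ≥ 0 and h₀ > 0 such that for all h ∈ [0, h₀], the local error of the Lie–Trotter splitting satisfies ‖Φ₂(h, Φ₁(h, x₀)) − Φ(h, x₀)‖ ≤ C h². -/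
open intervalIntegral in
/-- Integral representation of a flow. -/
lemma flow_eq_integral {n : ℕ} (f : (Fin n → ℝ) → (Fin n → ℝ)) (hf : Continuous f)
    (Φ : ℝ → (Fin n → ℝ) → (Fin n → ℝ)) (hΦ0 : ∀ ξ, Φ 0 ξ = ξ)
    (hΦ : ∀ t ξ, HasDerivAt (fun s => Φ s ξ) (f (Φ t ξ)) t)
    (ξ : Fin n → ℝ) (h : ℝ) :
    Φ h ξ - ξ = ∫ s in (0:ℝ)..h, f (Φ s ξ) := by
  have hcont : Continuous fun s => Φ s ξ :=
    continuous_iff_continuousAt.2 fun t => (hΦ t ξ).continuousAt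
  have hint : IntervalIntegrable (fun s => f (Φ s ξ)) MeasureTheory.volume 0 h :=
    (hf.comp hcont).intervalIntegrable _ _
  have := intervalIntegral.integral_eq_sub_of_hasDerivAt
    (f := fun s => Φ s ξ) (f' := fun s => f (Φ s ξ))
    (fun t _ => hΦ t ξ) hint
  rw [this]
  simp only [hΦ0]

/-- A flow of a bounded vector field moves at most `M * h` in time `h ≥ 0`. -/
lemma flow_dist_le {n : ℕ} (f : (Fin n → ℝ) → (Fin n → ℝ)) (hf : Continuous f)
    (Φ : ℝ → (Fin n → ℝ) → (Fin n → ℝ)) (hΦ0 : ∀ ξ, Φ 0 ξ = ξ)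
    (hΦ : ∀ t ξ, HasDerivAt (fun s => Φ s ξ) (f (Φ t ξ)) t)
    (M : ℝ) (hM : ∀ x, ‖f x‖ ≤ M)
    (ξ : Fin n → ℝ) (h : ℝ) (hh : 0 ≤ h) :
    ‖Φ h ξ - ξ‖ ≤ M * h := by
  rw [flow_eq_integral f hf Φ hΦ0 hΦ ξ h]
  calc ‖∫ s in (0:ℝ)..h, f (Φ s ξ)‖ ≤ M * |h - 0| :=
        intervalIntegral.norm_integral_le_of_norm_le_const fun s _ => hM _
    _ = M * h := by rw [sub_zero, abs_of_nonneg hh]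

/-- Local error of Lie–Trotter splitting for `x' = f₁(x) + f₂(x)` with smooth
vector fields having bounded derivatives up to order 2:  for each `x₀` there
are `C ≥ 0` and `h₀ > 0` with `‖Φ₂(h, Φ₁(h, x₀)) - Φ(h, x₀)‖ ≤ C h²` for all
`h ∈ [0, h₀]`, where `Φ₁, Φ₂, Φ` are the exact flows of `f₁`, `f₂`, `f₁+f₂`. -/
theorem lieTrotter_local_error_nonlinear {n : ℕ}
    (f₁ f₂ : (Fin n → ℝ) → (Fin n → ℝ))
    (hf₁ : ContDiff ℝ 2 f₁) (hf₂ : ContDiff ℝ 2 f₂)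
    (hb₁ : ∀ i : ℕ, i ≤ 2 → ∃ C : ℝ, ∀ x : Fin n → ℝ, ‖iteratedFDeriv ℝ i f₁ x‖ ≤ C)
    (hb₂ : ∀ i : ℕ, i ≤ 2 → ∃ C : ℝ, ∀ x : Fin n → ℝ, ‖iteratedFDeriv ℝ i f₂ x‖ ≤ C)
    (Φ₁ Φ₂ Φ : ℝ → (Fin n → ℝ) → (Fin n → ℝ))
    (hΦ₁0 : ∀ ξ, Φ₁ 0 ξ = ξ)
    (hΦ₁ : ∀ t ξ, HasDerivAt (fun s => Φ₁ s ξ) (f₁ (Φ₁ t ξ)) t)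
    (hΦ₂0 : ∀ ξ, Φ₂ 0 ξ = ξ)
    (hΦ₂ : ∀ t ξ, HasDerivAt (fun s => Φ₂ s ξ) (f₂ (Φ₂ t ξ)) t)
    (hΦ0 : ∀ ξ, Φ 0 ξ = ξ)
    (hΦ : ∀ t ξ, HasDerivAt (fun s => Φ s ξ) (f₁ (Φ t ξ) + f₂ (Φ t ξ)) t) :
    ∀ x₀ : Fin n → ℝ, ∃ C : ℝ, 0 ≤ C ∧ ∃ h₀ : ℝ, 0 < h₀ ∧
      ∀ h : ℝ, 0 ≤ h → h ≤ h₀ →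
        ‖Φ₂ h (Φ₁ h x₀) - Φ h x₀‖ ≤ C * h ^ 2 := by
  intro x₀
  -- bounds on f₁, f₂ and their derivatives
  obtain ⟨M₁', hM₁'⟩ := hb₁ 0 (by norm_num)
  obtain ⟨M₂', hM₂'⟩ := hb₂ 0 (by norm_num)
  obtain ⟨L₁', hL₁'⟩ := hb₁ 1 (by norm_num)
  obtain ⟨L₂', hL₂'⟩ := hb₂ 1 (by norm_num)
  set M₁ := max M₁' 0 with hM₁def
  set M₂ := max M₂' 0 with hM₂def
  set L₁ := max L₁' 0 with hL₁def
  set L₂ := max L₂' 0 with hL₂def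
  have hM₁ : ∀ x, ‖f₁ x‖ ≤ M₁ := fun x => by
    have := hM₁' x; rw [norm_iteratedFDeriv_zero] at this
    exact this.trans (le_max_left _ _)
  have hM₂ : ∀ x, ‖f₂ x‖ ≤ M₂ := fun x => by
    have := hM₂' x; rw [norm_iteratedFDeriv_zero] at this
    exact this.trans (le_max_left _ _)
  have hM₁0 : 0 ≤ M₁ := le_max_right _ _
  have hM₂0 : 0 ≤ M₂ := le_max_right _ _
  have hL₁0 : 0 ≤ L₁ := le_max_right _ _
  have hL₂0 : 0 ≤ L₂ := le_max_right _ _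
  have hfd₁ : ∀ x, ‖fderiv ℝ f₁ x‖ ≤ L₁ := fun x => by
    calc ‖fderiv ℝ f₁ x‖ = ‖iteratedFDeriv ℝ 1 f₁ x‖ := by
          rw [← norm_iteratedFDeriv_fderiv (n := 0), norm_iteratedFDeriv_zero]
      _ ≤ L₁ := (hL₁' x).trans (le_max_left _ _)
  have hfd₂ : ∀ x, ‖fderiv ℝ f₂ x‖ ≤ L₂ := fun x => by
    calc ‖fderiv ℝ f₂ x‖ = ‖iteratedFDeriv ℝ 1 f₂ x‖ := by
          rw [← norm_iteratedFDeriv_fderiv (n := 0), norm_iteratedFDeriv_zero]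
      _ ≤ L₂ := (hL₂' x).trans (le_max_left _ _)
  have hdiff₁ : Differentiable ℝ f₁ := hf₁.differentiable (by norm_num)
  have hdiff₂ : Differentiable ℝ f₂ := hf₂.differentiable (by norm_num)
  -- Lipschitz estimates
  have hlip₁ : ∀ x y, ‖f₁ x - f₁ y‖ ≤ L₁ * ‖x - y‖ := fun x y =>
    (convex_univ).norm_image_sub_le_of_norm_fderiv_le
      (fun z _ => hdiff₁ z) (fun z _ => hfd₁ z) trivial trivial
  have hlip₂ : ∀ x y, ‖f₂ x - f₂ y‖ ≤ L₂ * ‖x - y‖ := fun x y =>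
    (convex_univ).norm_image_sub_le_of_norm_fderiv_le
      (fun z _ => hdiff₂ z) (fun z _ => hfd₂ z) trivial trivial
  have hc₁ : Continuous f₁ := hf₁.continuous
  have hc₂ : Continuous f₂ := hf₂.continuous
  have hc : Continuous (fun x => f₁ x + f₂ x) := hc₁.add hc₂
  have hMsum : ∀ x, ‖f₁ x + f₂ x‖ ≤ M₁ + M₂ := fun x =>
    (norm_add_le _ _).trans (add_le_add (hM₁ x) (hM₂ x))
  set K := L₁ * (2 * M₁ + M₂) + L₂ * (2 * M₁ + 2 * M₂) with hKdef
  have hK0 : 0 ≤ K := by positivity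
  refine ⟨K, hK0, 1, one_pos, fun h hh _ => ?_⟩
  set ξ := Φ₁ h x₀ with hξdef
  -- continuity of the flows in time
  have hcΦ₁ : Continuous fun s => Φ₁ s x₀ :=
    continuous_iff_continuousAt.2 fun t => (hΦ₁ t x₀).continuousAt
  have hcΦ₂ : Continuous fun s => Φ₂ s ξ :=
    continuous_iff_continuousAt.2 fun t => (hΦ₂ t ξ).continuousAt
  have hcΦ : Continuous fun s => Φ s x₀ :=
    continuous_iff_continuousAt.2 fun t => (hΦ t x₀).continuousAt
  -- integral representations
  have e₁ : Φ₁ h x₀ - x₀ = ∫ s in (0:ℝ)..h, f₁ (Φ₁ s x₀) :=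
    flow_eq_integral f₁ hc₁ Φ₁ hΦ₁0 hΦ₁ x₀ h
  have e₂ : Φ₂ h ξ - ξ = ∫ s in (0:ℝ)..h, f₂ (Φ₂ s ξ) :=
    flow_eq_integral f₂ hc₂ Φ₂ hΦ₂0 hΦ₂ ξ h
  have e : Φ h x₀ - x₀ = ∫ s in (0:ℝ)..h, (f₁ (Φ s x₀) + f₂ (Φ s x₀)) :=
    flow_eq_integral (fun x => f₁ x + f₂ x) hc Φ hΦ0 hΦ x₀ h
  -- integrability facts
  have i₁ : IntervalIntegrable (fun s => f₁ (Φ₁ s x₀)) MeasureTheory.volume 0 h :=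
    (hc₁.comp hcΦ₁).intervalIntegrable _ _
  have i₂ : IntervalIntegrable (fun s => f₂ (Φ₂ s ξ)) MeasureTheory.volume 0 h :=
    (hc₂.comp hcΦ₂).intervalIntegrable _ _
  have i₃ : IntervalIntegrable (fun s => f₁ (Φ s x₀) + f₂ (Φ s x₀)) MeasureTheory.volume 0 h :=
    ((hc₁.comp hcΦ).add (hc₂.comp hcΦ)).intervalIntegrable _ _
  -- rewrite the error as a single integral
  have key : Φ₂ h ξ - Φ h x₀ =
      ∫ s in (0:ℝ)..h,
        ((f₁ (Φ₁ s x₀) - f₁ (Φ s x₀)) + (f₂ (Φ₂ s ξ) - f₂ (Φ s x₀))) := by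
    have : Φ₂ h ξ - Φ h x₀ = (Φ₁ h x₀ - x₀) + (Φ₂ h ξ - ξ) - (Φ h x₀ - x₀) := by
      rw [hξdef]; abel
    rw [this, e₁, e₂, e, ← intervalIntegral.integral_add i₁ i₂,
      ← intervalIntegral.integral_sub (i₁.add i₂) i₃]
    congr 1
    funext s
    abel
  rw [key]
  -- pointwise bound on the integrand
  have hbound : ∀ s ∈ Set.uIoc (0:ℝ) h,
      ‖(f₁ (Φ₁ s x₀) - f₁ (Φ s x₀)) + (f₂ (Φ₂ s ξ) - f₂ (Φ s x₀))‖ ≤ K * h := by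
    intro s hs
    rw [Set.uIoc_of_le hh] at hs
    obtain ⟨hs0, hsh⟩ := hs
    have hs0' : (0:ℝ) ≤ s := le_of_lt hs0
    have d₁ : ‖Φ₁ s x₀ - x₀‖ ≤ M₁ * s :=
      flow_dist_le f₁ hc₁ Φ₁ hΦ₁0 hΦ₁ M₁ hM₁ x₀ s hs0'
    have d₁h : ‖Φ₁ h x₀ - x₀‖ ≤ M₁ * h :=
      flow_dist_le f₁ hc₁ Φ₁ hΦ₁0 hΦ₁ M₁ hM₁ x₀ h hh
    have d₂ : ‖Φ₂ s ξ - ξ‖ ≤ M₂ * s :=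
      flow_dist_le f₂ hc₂ Φ₂ hΦ₂0 hΦ₂ M₂ hM₂ ξ s hs0'
    have d : ‖Φ s x₀ - x₀‖ ≤ (M₁ + M₂) * s :=
      flow_dist_le (fun x => f₁ x + f₂ x) hc Φ hΦ0 hΦ (M₁ + M₂) hMsum x₀ s hs0'
    have t₁ : ‖f₁ (Φ₁ s x₀) - f₁ (Φ s x₀)‖ ≤ L₁ * (2 * M₁ + M₂) * h := by
      calc ‖f₁ (Φ₁ s x₀) - f₁ (Φ s x₀)‖ ≤ L₁ * ‖Φ₁ s x₀ - Φ s x₀‖ := hlip₁ _ _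
        _ ≤ L₁ * (‖Φ₁ s x₀ - x₀‖ + ‖Φ s x₀ - x₀‖) := by
            apply mul_le_mul_of_nonneg_left _ hL₁0
            calc ‖Φ₁ s x₀ - Φ s x₀‖ = ‖(Φ₁ s x₀ - x₀) - (Φ s x₀ - x₀)‖ := by abel_nf
              _ ≤ _ := norm_sub_le _ _
        _ ≤ L₁ * ((2 * M₁ + M₂) * s) := by
            apply mul_le_mul_of_nonneg_left _ hL₁0
            calc ‖Φ₁ s x₀ - x₀‖ + ‖Φ s x₀ - x₀‖ ≤ M₁ * s + (M₁ + M₂) * s :=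
                  add_le_add d₁ d
              _ = (2 * M₁ + M₂) * s := by ring
        _ ≤ L₁ * (2 * M₁ + M₂) * h := by
            rw [mul_assoc]
            apply mul_le_mul_of_nonneg_left _ hL₁0
            exact mul_le_mul_of_nonneg_left hsh (by positivity)
    have t₂ : ‖f₂ (Φ₂ s ξ) - f₂ (Φ s x₀)‖ ≤ L₂ * (2 * M₁ + 2 * M₂) * h := by
      calc ‖f₂ (Φ₂ s ξ) - f₂ (Φ s x₀)‖ ≤ L₂ * ‖Φ₂ s ξ - Φ s x₀‖ := hlip₂ _ _
        _ ≤ L₂ * (‖Φ₂ s ξ - ξ‖ + ‖Φ₁ h x₀ - x₀‖ + ‖Φ s x₀ - x₀‖) := by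
            apply mul_le_mul_of_nonneg_left _ hL₂0
            calc ‖Φ₂ s ξ - Φ s x₀‖
                = ‖(Φ₂ s ξ - ξ) + (Φ₁ h x₀ - x₀) - (Φ s x₀ - x₀)‖ := by
                  rw [hξdef]; abel_nf
              _ ≤ ‖(Φ₂ s ξ - ξ) + (Φ₁ h x₀ - x₀)‖ + ‖Φ s x₀ - x₀‖ := norm_sub_le _ _
              _ ≤ ‖Φ₂ s ξ - ξ‖ + ‖Φ₁ h x₀ - x₀‖ + ‖Φ s x₀ - x₀‖ := by
                  gcongr; exact norm_add_le _ _
        _ ≤ L₂ * (M₂ * s + M₁ * h + (M₁ + M₂) * s) := by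
            apply mul_le_mul_of_nonneg_left _ hL₂0
            exact add_le_add (add_le_add d₂ d₁h) d
        _ ≤ L₂ * (2 * M₁ + 2 * M₂) * h := by
            rw [mul_assoc]
            apply mul_le_mul_of_nonneg_left _ hL₂0
            calc M₂ * s + M₁ * h + (M₁ + M₂) * s
                ≤ M₂ * h + M₁ * h + (M₁ + M₂) * h := by gcongr
              _ = (2 * M₁ + 2 * M₂) * h := by ring
    calc ‖(f₁ (Φ₁ s x₀) - f₁ (Φ s x₀)) + (f₂ (Φ₂ s ξ) - f₂ (Φ s x₀))‖
        ≤ ‖f₁ (Φ₁ s x₀) - f₁ (Φ s x₀)‖ + ‖f₂ (Φ₂ s ξ) - f₂ (Φ s x₀)‖ := norm_add_le _ _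
      _ ≤ L₁ * (2 * M₁ + M₂) * h + L₂ * (2 * M₁ + 2 * M₂) * h := add_le_add t₁ t₂
      _ = K * h := by rw [hKdef]; ring
  calc ‖∫ s in (0:ℝ)..h, ((f₁ (Φ₁ s x₀) - f₁ (Φ s x₀)) + (f₂ (Φ₂ s ξ) - f₂ (Φ s x₀)))‖
      ≤ K * h * |h - 0| := intervalIntegral.norm_integral_le_of_norm_le_const hbound
    _ = K * h ^ 2 := by rw [sub_zero, abs_of_nonneg hh]; ring
end

section
/- Let f₁, f₂ : ℝⁿ → ℝⁿ be three times continuously differentiable with f₁, f₂ and all their derivatives up to order 3 bounded on ℝⁿ. Let Φ₁, Φ₂, Φ : ℝ × ℝⁿ → ℝⁿ be the exact flows of x' = f₁(x), x' = f₂(x), and x' = f₁(x) + f₂(x) respectively, i.e., Φᵢ(0, ξ) = ξ, ∂_t Φᵢ(t, ξ) = fᵢ(Φᵢ(t, ξ)) for all t, ξ (and analogously for Φ with vector field f₁ + f₂). Then for every x₀ ∈ ℝⁿ there exist constants C ≥ 0 and h₀ > 0 such that for all h ∈ [0, h₀], the local error of the Strang splitting satisfies ‖Φ₁(h/2, Φ₂(h,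 Φ₁(h/2, x₀))) − Φ(h, x₀)‖ ≤ C h³. -/
/-!
Each exact flow agrees with its second-order Taylor polynomial in time,
`Φ t ξ = ξ + t f ξ + t²/2 f'(ξ) (f ξ) + O(t³)`, with a constant independent of `ξ` because the
bounds on `f, f', f''` are global; it is obtained by integrating the ODE three times. This
uniformity allows expanding the inner flows at the moving points `a = Φ₁(h/2, x₀)` and
`b = Φ₂(h, a)`, both `O(h)`-close to `x₀`. Taylor-expanding `f₂(a)`, `f₁(b)` and `f'(·) f(·)`
about `x₀` then shows that the Strang composition equals
`x₀ + h (f₁ + f₂) + h²/2 (f₁ + f₂)'(f₁ + f₂)` at `x₀` up to `O(h³)`, as does `Φ(h, x₀)`.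
-/

open Set Filter Topology Asymptotics

variable {E F : Type*} [NormedAddCommGroup E] [NormedSpace ℝ E]
  [NormedAddCommGroup F] [NormedSpace ℝ F]

lemma norm_le_of_hasDerivAt_of_norm_le_mul_pow {φ φ' : ℝ → E} {K : ℝ} {k : ℕ}
    (hφ : ∀ t, HasDerivAt φ (φ' t) t) (hφ0 : φ 0 = 0)
    (hφ' : ∀ t, 0 ≤ t → ‖φ' t‖ ≤ K * t ^ k) {T : ℝ} (hT : 0 ≤ T) :
    ‖φ T‖ ≤ K / (k + 1) * T ^ (k + 1) := by
  have hB : ∀ t, HasDerivAt (fun t => K / (k + 1) * t ^ (k + 1)) (K * t ^ k) t := fun t => by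
    refine ((hasDerivAt_pow (k + 1) t).const_mul (K / (k + 1))).congr_deriv ?_
    push_cast
    field_simp
  exact image_norm_le_of_norm_deriv_right_le_deriv_boundary
    (fun t _ => (hφ t).continuousAt.continuousWithinAt) (fun t _ => (hφ t).hasDerivWithinAt)
    (by simp [hφ0]) hB (fun t ht => hφ' t ht.1) ⟨hT, le_rfl⟩

lemma norm_sub_sub_fderiv_le {f : E → F} {M : ℝ} (hf : ContDiff ℝ 2 f)
    (h₂ : ∀ x, ‖fderiv ℝ (fderiv ℝ f) x‖ ≤ M) (x y : E) :
    ‖f y - f x - fderiv ℝ f x (y - x)‖ ≤ M * ‖y - x‖ ^ 2 := by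
  have hM : 0 ≤ M := (norm_nonneg (fderiv ℝ (fderiv ℝ f) x)).trans (h₂ x)
  have hdf : Differentiable ℝ (fderiv ℝ f) :=
    (hf.fderiv_right (m := 1) le_rfl).differentiable one_ne_zero
  have hlip : ∀ z ∈ Metric.closedBall x ‖y - x‖, ‖fderiv ℝ f z - fderiv ℝ f x‖ ≤ M * ‖y - x‖ :=
    fun z hz => (Convex.norm_image_sub_le_of_norm_fderiv_le (fun w _ => hdf w) (fun w _ => h₂ w)
      convex_univ (mem_univ x) (mem_univ z)).trans
      (mul_le_mul_of_nonneg_left (mem_closedBall_iff_norm.1 hz) hM)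
  calc ‖f y - f x - fderiv ℝ f x (y - x)‖ ≤ M * ‖y - x‖ * ‖y - x‖ :=
        Convex.norm_image_sub_le_of_norm_fderiv_le' (fun z _ => hf.differentiable two_ne_zero z)
          hlip (convex_closedBall _ _) (Metric.mem_closedBall_self (norm_nonneg _))
          (mem_closedBall_iff_norm.2 le_rfl)
    _ = M * ‖y - x‖ ^ 2 := by ring

lemma exists_norm_le_of_iteratedFDeriv {f : E → F}
    (hb : ∀ i, i ≤ 2 → ∃ C, ∀ x, ‖iteratedFDeriv ℝ i f x‖ ≤ C) :
    ∃ M, (∀ x, ‖f x‖ ≤ M) ∧ (∀ x, ‖fderiv ℝ f x‖ ≤ M) ∧ ∀ x, ‖fderiv ℝ (fderiv ℝ f) x‖ ≤ M := by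
  obtain ⟨C₀, hC₀⟩ := hb 0 (by norm_num)
  obtain ⟨C₁, hC₁⟩ := hb 1 (by norm_num)
  obtain ⟨C₂, hC₂⟩ := hb 2 le_rfl
  refine ⟨max C₀ (max C₁ C₂), fun x => ?_, fun x => ?_, fun x => ?_⟩
  · rw [← norm_iteratedFDeriv_zero (𝕜 := ℝ)]
    exact (hC₀ x).trans (le_max_left _ _)
  · rw [← norm_iteratedFDeriv_one]
    exact (hC₁ x).trans (le_max_of_le_right (le_max_left _ _))
  · rw [← norm_iteratedFDeriv_one, norm_iteratedFDeriv_fderiv]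
    exact (hC₂ x).trans (le_max_of_le_right (le_max_right _ _))

lemma bounded_iteratedFDeriv_add {k : ℕ} {f g : E → F} (hf : ContDiff ℝ k f) (hg : ContDiff ℝ k g)
    (hbf : ∀ i, i ≤ k → ∃ C, ∀ x, ‖iteratedFDeriv ℝ i f x‖ ≤ C)
    (hbg : ∀ i, i ≤ k → ∃ C, ∀ x, ‖iteratedFDeriv ℝ i g x‖ ≤ C) :
    ∀ i, i ≤ k → ∃ C, ∀ x, ‖iteratedFDeriv ℝ i (f + g) x‖ ≤ C := by
  intro i hi
  obtain ⟨C, hC⟩ := hbf i hi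
  obtain ⟨D, hD⟩ := hbg i hi
  have hik : (i : WithTop ℕ∞) ≤ k := by exact_mod_cast hi
  refine ⟨C + D, fun x => ?_⟩
  rw [iteratedFDeriv_add_apply (hf.of_le hik).contDiffAt (hg.of_le hik).contDiffAt]
  exact norm_add_le_of_le (hC x) (hD x)

/-- The Taylor polynomial of degree two, in time, of the flow of `x' = f x`. -/
noncomputable def secondOrderFlow (f : E → E) (t : ℝ) (x : E) : E :=
  x + t • f x + (t ^ 2 / 2) • fderiv ℝ f x (f x)

lemma hasDerivAt_secondOrderFlow (f : E → E) (t : ℝ) (x : E) :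
    HasDerivAt (fun s => secondOrderFlow f s x) (f x + t • fderiv ℝ f x (f x)) t := by
  refine ((((hasDerivAt_id t).smul_const (f x)).const_add x).fun_add
    (((hasDerivAt_pow 2 t).div_const 2).smul_const (fderiv ℝ f x (f x)))).congr_deriv ?_
  simp

section Flow

variable {f : E → E} {Φ : ℝ → E → E} {M : ℝ}

lemma flow_sub_le (hΦ0 : ∀ ξ, Φ 0 ξ = ξ)
    (hΦ : ∀ t ξ, HasDerivAt (fun s => Φ s ξ) (f (Φ t ξ)) t)
    (h₀ : ∀ x, ‖f x‖ ≤ M) (ξ : E) {t : ℝ} (ht : 0 ≤ t) :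
    ‖Φ t ξ - ξ‖ ≤ M * t := by
  simpa using norm_le_of_hasDerivAt_of_norm_le_mul_pow (k := 0)
    (fun s => (hΦ s ξ).sub_const ξ) (by simp [hΦ0]) (fun s _ => by simpa using h₀ _) ht

lemma flow_sub_sub_smul_le (hf : ContDiff ℝ 2 f) (hΦ0 : ∀ ξ, Φ 0 ξ = ξ)
    (hΦ : ∀ t ξ, HasDerivAt (fun s => Φ s ξ) (f (Φ t ξ)) t)
    (h₀ : ∀ x, ‖f x‖ ≤ M) (h₁ : ∀ x, ‖fderiv ℝ f x‖ ≤ M) (ξ : E) {t : ℝ} (ht : 0 ≤ t) :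
    ‖Φ t ξ - ξ - t • f ξ‖ ≤ M ^ 2 / 2 * t ^ 2 := by
  have hM : 0 ≤ M := (norm_nonneg _).trans (h₀ ξ)
  have hderiv : ∀ s, HasDerivAt (fun s => Φ s ξ - ξ - s • f ξ) (f (Φ s ξ) - f ξ) s := fun s => by
    simpa using ((hΦ s ξ).sub_const ξ).fun_sub ((hasDerivAt_id s).smul_const (f ξ))
  have hbound : ∀ s, 0 ≤ s → ‖f (Φ s ξ) - f ξ‖ ≤ M ^ 2 * s ^ 1 := fun s hs =>
    calc ‖f (Φ s ξ) - f ξ‖ ≤ M * ‖Φ s ξ - ξ‖ :=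
          Convex.norm_image_sub_le_of_norm_fderiv_le
            (fun z _ => hf.differentiable two_ne_zero z) (fun z _ => h₁ z) convex_univ
            (mem_univ _) (mem_univ _)
      _ ≤ M * (M * s) := mul_le_mul_of_nonneg_left (flow_sub_le hΦ0 hΦ h₀ ξ hs) hM
      _ = M ^ 2 * s ^ 1 := by ring
  convert norm_le_of_hasDerivAt_of_norm_le_mul_pow hderiv (by simp [hΦ0]) hbound ht using 2
  norm_num

lemma flow_sub_secondOrderFlow_le (hf : ContDiff ℝ 2 f) (hΦ0 : ∀ ξ, Φ 0 ξ = ξ)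
    (hΦ : ∀ t ξ, HasDerivAt (fun s => Φ s ξ) (f (Φ t ξ)) t)
    (h₀ : ∀ x, ‖f x‖ ≤ M) (h₁ : ∀ x, ‖fderiv ℝ f x‖ ≤ M)
    (h₂ : ∀ x, ‖fderiv ℝ (fderiv ℝ f) x‖ ≤ M) (ξ : E) {t : ℝ} (ht : 0 ≤ t) :
    ‖Φ t ξ - secondOrderFlow f t ξ‖ ≤ M ^ 3 / 2 * t ^ 3 := by
  have hM : 0 ≤ M := (norm_nonneg _).trans (h₀ ξ)
  set A := fderiv ℝ f ξ
  have hderiv : ∀ s, HasDerivAt (fun s => Φ s ξ - secondOrderFlow f s ξ)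
      ((f (Φ s ξ) - f ξ - A (Φ s ξ - ξ)) + A (Φ s ξ - ξ - s • f ξ)) s := fun s => by
    refine ((hΦ s ξ).fun_sub (hasDerivAt_secondOrderFlow f s ξ)).congr_deriv ?_
    simp only [map_sub, map_smul]
    abel
  have hbound : ∀ s, 0 ≤ s →
      ‖(f (Φ s ξ) - f ξ - A (Φ s ξ - ξ)) + A (Φ s ξ - ξ - s • f ξ)‖ ≤ 3 / 2 * M ^ 3 * s ^ 2 :=
    fun s hs => calc
      _ ≤ M * ‖Φ s ξ - ξ‖ ^ 2 + M * ‖Φ s ξ - ξ - s • f ξ‖ :=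
          norm_add_le_of_le (norm_sub_sub_fderiv_le hf h₂ ξ _)
            ((A.le_opNorm _).trans (mul_le_mul_of_nonneg_right (h₁ ξ) (norm_nonneg _)))
      _ ≤ M * (M * s) ^ 2 + M * (M ^ 2 / 2 * s ^ 2) := by
          gcongr
          exacts [flow_sub_le hΦ0 hΦ h₀ ξ hs, flow_sub_sub_smul_le hf hΦ0 hΦ h₀ h₁ ξ hs]
      _ = 3 / 2 * M ^ 3 * s ^ 2 := by ring
  convert norm_le_of_hasDerivAt_of_norm_le_mul_pow hderiv (by simp [hΦ0, secondOrderFlow])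
    hbound ht using 2
  norm_num
  ring

end Flow

lemma isBigO_pow_div_const (l : Filter ℝ) (k : ℕ) (c : ℝ) :
    (fun h : ℝ => h ^ k / c) =O[l] (· ^ k) := by
  simpa only [div_eq_inv_mul] using isBigO_const_mul_self c⁻¹ (· ^ k) l

lemma Asymptotics.IsBigO.smul_pow {l : Filter ℝ} {τ : ℝ → ℝ} {v : ℝ → E} {k m : ℕ}
    (hτ : τ =O[l] (· ^ k)) (hv : v =O[l] (· ^ m)) :
    (fun h => τ h • v h) =O[l] (· ^ (k + m)) :=
  (hτ.smul hv).congr_right fun h => by rw [smul_eq_mul, pow_add]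

lemma isBigO_comp_of_norm_le_mul_pow {α β : Type*} [Norm β] {G : ℝ → α → β} {K : ℝ} {k : ℕ}
    (hG : ∀ t ξ, 0 ≤ t → ‖G t ξ‖ ≤ K * t ^ k) {τ : ℝ → ℝ} (hτ : ∀ h, 0 ≤ h → 0 ≤ τ h ∧ τ h ≤ h)
    (ξ : ℝ → α) : (fun h => G (τ h) (ξ h)) =O[𝓝[≥] 0] (· ^ k) := by
  refine IsBigO.of_bound |K| ?_
  filter_upwards [self_mem_nhdsWithin] with h (hh : 0 ≤ h)
  obtain ⟨hτ0, hτh⟩ := hτ h hh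
  calc ‖G (τ h) (ξ h)‖ ≤ K * τ h ^ k := hG _ _ hτ0
    _ ≤ |K| * h ^ k := mul_le_mul (le_abs_self K) (pow_le_pow_left₀ hτ0 hτh k) (by positivity)
        (abs_nonneg K)
    _ = |K| * ‖h ^ k‖ := by rw [Real.norm_of_nonneg (by positivity)]

lemma isBigO_comp_sub_sub_fderiv {l : Filter ℝ} {f : E → F} {M : ℝ} (hf : ContDiff ℝ 2 f)
    (h₂ : ∀ x, ‖fderiv ℝ (fderiv ℝ f) x‖ ≤ M) {x₀ : E} {y v : ℝ → E}
    (hy : (fun h => y h - x₀) =O[l] (· ^ 1)) (hyv : (fun h => y h - x₀ - v h) =O[l] (· ^ 2)) :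
    (fun h => f (y h) - f x₀ - fderiv ℝ f x₀ (v h)) =O[l] (· ^ 2) := by
  have htaylor : (fun h => f (y h) - f x₀ - fderiv ℝ f x₀ (y h - x₀)) =O[l] (· ^ 2) := by
    refine (isBigO_of_le' (c := M) l fun h =>
      (norm_sub_sub_fderiv_le hf h₂ x₀ (y h)).trans_eq ?_).trans
        ((hy.norm_left.pow 2).congr_right fun h => by ring)
    rw [Real.norm_of_nonneg (by positivity)]
  refine (htaylor.add (((fderiv ℝ f x₀).isBigO_comp _ l).trans hyv)).congr_left fun h => ?_
  simp only [map_sub]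
  abel

lemma DifferentiableAt.isBigO_comp_sub {l : Filter ℝ} {G : E → F} {x₀ : E}
    (hG : DifferentiableAt ℝ G x₀) (hl : l ≤ 𝓝 0) {y : ℝ → E}
    (hy : (fun h => y h - x₀) =O[l] (· ^ 1)) :
    (fun h => G (y h) - G x₀) =O[l] (· ^ 1) := by
  have hpow : Tendsto (fun h : ℝ => h ^ 1) l (𝓝 0) := by
    simp only [pow_one]
    exact tendsto_id.mono_left hl
  exact (hG.isBigO_sub.comp_tendsto (tendsto_sub_nhds_zero_iff.1 (hy.trans_tendsto hpow))).trans hy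

lemma exists_norm_le_mul_pow_of_isBigO_nhdsGE {β : Type*} [Norm β] {u : ℝ → β} {k : ℕ}
    (hu : u =O[𝓝[≥] 0] (· ^ k)) :
    ∃ C : ℝ, 0 ≤ C ∧ ∃ h₀ : ℝ, 0 < h₀ ∧ ∀ h : ℝ, 0 ≤ h → h ≤ h₀ → ‖u h‖ ≤ C * h ^ k := by
  obtain ⟨C, hC, hCu⟩ := hu.exists_nonneg
  obtain ⟨ε, hε, hsub⟩ := mem_nhdsGE_iff_exists_Ico_subset.1 hCu.bound
  refine ⟨C, hC, ε / 2, half_pos hε, fun h hh hhε => ?_⟩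
  have hbound : ‖u h‖ ≤ C * ‖h ^ k‖ := hsub ⟨hh, by linarith [mem_Ioi.1 hε]⟩
  rwa [Real.norm_of_nonneg (by positivity)] at hbound

lemma isBigO_flow_expansions {f : E → E} {Φ : ℝ → E → E} (hf : ContDiff ℝ 2 f)
    (hb : ∀ i, i ≤ 2 → ∃ C, ∀ x, ‖iteratedFDeriv ℝ i f x‖ ≤ C)
    (hΦ0 : ∀ ξ, Φ 0 ξ = ξ) (hΦ : ∀ t ξ, HasDerivAt (fun s => Φ s ξ) (f (Φ t ξ)) t)
    {τ : ℝ → ℝ} (hτ : ∀ h, 0 ≤ h → 0 ≤ τ h ∧ τ h ≤ h) (ξ : ℝ → E) :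
    (fun h => Φ (τ h) (ξ h) - ξ h) =O[𝓝[≥] 0] (· ^ 1) ∧
    (fun h => Φ (τ h) (ξ h) - ξ h - τ h • f (ξ h)) =O[𝓝[≥] 0] (· ^ 2) ∧
    (fun h => Φ (τ h) (ξ h) - secondOrderFlow f (τ h) (ξ h)) =O[𝓝[≥] 0] (· ^ 3) := by
  obtain ⟨M, h₀, h₁, h₂⟩ := exists_norm_le_of_iteratedFDeriv hb
  have h₀' : ∀ t x, 0 ≤ t → ‖Φ t x - x‖ ≤ M * t ^ 1 := fun t x ht => by
    simpa using flow_sub_le hΦ0 hΦ h₀ x ht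
  exact ⟨isBigO_comp_of_norm_le_mul_pow h₀' hτ ξ,
    isBigO_comp_of_norm_le_mul_pow (fun t ξ ht => flow_sub_sub_smul_le hf hΦ0 hΦ h₀ h₁ ξ ht) hτ ξ,
    isBigO_comp_of_norm_le_mul_pow
      (fun t ξ ht => flow_sub_secondOrderFlow_le hf hΦ0 hΦ h₀ h₁ h₂ ξ ht) hτ ξ⟩

lemma differentiable_fderiv_apply_self {f : E → E} (hf : ContDiff ℝ 2 f) :
    Differentiable ℝ (fun x => fderiv ℝ f x (f x)) :=
  ((hf.fderiv_right (m := 1) le_rfl).differentiable one_ne_zero).clm_apply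
    (hf.differentiable two_ne_zero)

theorem strang_sub_flow_isBigO {f₁ f₂ : E → E} (hf₁ : ContDiff ℝ 2 f₁) (hf₂ : ContDiff ℝ 2 f₂)
    (hbdd₁ : ∀ i, i ≤ 2 → ∃ C, ∀ x, ‖iteratedFDeriv ℝ i f₁ x‖ ≤ C)
    (hbdd₂ : ∀ i, i ≤ 2 → ∃ C, ∀ x, ‖iteratedFDeriv ℝ i f₂ x‖ ≤ C)
    {Φ₁ Φ₂ Φ : ℝ → E → E}
    (hΦ₁0 : ∀ ξ, Φ₁ 0 ξ = ξ) (hΦ₁ : ∀ t ξ, HasDerivAt (fun s => Φ₁ s ξ) (f₁ (Φ₁ t ξ)) t)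
    (hΦ₂0 : ∀ ξ, Φ₂ 0 ξ = ξ) (hΦ₂ : ∀ t ξ, HasDerivAt (fun s => Φ₂ s ξ) (f₂ (Φ₂ t ξ)) t)
    (hΦ0 : ∀ ξ, Φ 0 ξ = ξ)
    (hΦ : ∀ t ξ, HasDerivAt (fun s => Φ s ξ) (f₁ (Φ t ξ) + f₂ (Φ t ξ)) t) (x₀ : E) :
    (fun h => Φ₁ (h / 2) (Φ₂ h (Φ₁ (h / 2) x₀)) - Φ h x₀) =O[𝓝[≥] 0] (· ^ 3) := by
  obtain ⟨M₁, -, -, hM₁⟩ := exists_norm_le_of_iteratedFDeriv hbdd₁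
  obtain ⟨M₂, -, -, hM₂⟩ := exists_norm_le_of_iteratedFDeriv hbdd₂
  have hhalf : ∀ h : ℝ, 0 ≤ h → 0 ≤ h / 2 ∧ h / 2 ≤ h := fun h hh => ⟨by positivity, by linarith⟩
  have hid : ∀ h : ℝ, 0 ≤ h → 0 ≤ h ∧ h ≤ h := fun h hh => ⟨hh, le_rfl⟩
  have hl : 𝓝[≥] (0 : ℝ) ≤ 𝓝 0 := nhdsWithin_le_nhds
  have hh : (fun h : ℝ => h) =O[𝓝[≥] 0] (· ^ 1) := by simpa using isBigO_pow_div_const _ 1 1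
  have hh2 : (fun h : ℝ => h / 2) =O[𝓝[≥] 0] (· ^ 1) := by simpa using isBigO_pow_div_const _ 1 2
  obtain ⟨ha₀, ha₁, ha₂⟩ := isBigO_flow_expansions hf₁ hbdd₁ hΦ₁0 hΦ₁ hhalf (fun _ => x₀)
  obtain ⟨hba₀, hba₁, hba₂⟩ :=
    isBigO_flow_expansions hf₂ hbdd₂ hΦ₂0 hΦ₂ hid (fun h => Φ₁ (h / 2) x₀)
  obtain ⟨-, -, hcb₂⟩ :=
    isBigO_flow_expansions hf₁ hbdd₁ hΦ₁0 hΦ₁ hhalf (fun h => Φ₂ h (Φ₁ (h / 2) x₀))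
  obtain ⟨-, -, hΦx₀⟩ := isBigO_flow_expansions (hf₁.add hf₂)
    (bounded_iteratedFDeriv_add hf₁ hf₂ hbdd₁ hbdd₂) hΦ0 hΦ hid (fun _ => x₀)
  have hf₂a₁ := isBigO_comp_sub_sub_fderiv hf₂ hM₂ ha₀ ha₁
  have hDf₂a₀ := (differentiable_fderiv_apply_self hf₂ x₀).isBigO_comp_sub hl ha₀
  have hf₂a₀ := (hf₂.differentiable two_ne_zero x₀).isBigO_comp_sub hl ha₀
  have hb₀ : (fun h => Φ₂ h (Φ₁ (h / 2) x₀) - x₀) =O[𝓝[≥] 0] (· ^ 1) :=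
    (hba₀.add ha₀).congr_left fun h => by abel
  have hb₁ : (fun h => Φ₂ h (Φ₁ (h / 2) x₀) - x₀ - ((h / 2) • f₁ x₀ + h • f₂ x₀))
      =O[𝓝[≥] 0] (· ^ 2) :=
    ((hba₁.add ha₁).add (hh.smul_pow hf₂a₀)).congr_left fun h => by module
  have hf₁b₁ := isBigO_comp_sub_sub_fderiv hf₁ hM₁ hb₀ hb₁
  have hDf₁b₀ := (differentiable_fderiv_apply_self hf₁ x₀).isBigO_comp_sub hl hb₀
  -- The difference is the sum of these remainders: all terms of order `≤ h²` cancel.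
  have h3 := (((((((hcb₂.add hba₂).add ha₂).sub hΦx₀).add (hh.smul_pow hf₂a₁)).add
    ((isBigO_pow_div_const _ 2 2).smul_pow hDf₂a₀)).add (hh2.smul_pow hf₁b₁)).add
    ((isBigO_pow_div_const _ 2 8).smul_pow hDf₁b₀))
  refine h3.congr_left fun h => ?_
  have hD : fderiv ℝ (fun x => f₁ x + f₂ x) x₀ = fderiv ℝ f₁ x₀ + fderiv ℝ f₂ x₀ :=
    fderiv_fun_add (hf₁.differentiable two_ne_zero x₀) (hf₂.differentiable two_ne_zero x₀)
  simp only [secondOrderFlow, hD, add_apply, map_add, map_smul]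
  module

/-- Local error of Strang splitting for `x' = f₁(x) + f₂(x)` with smooth
vector fields having bounded derivatives up to order 3:  for each `x₀` there
are `C ≥ 0` and `h₀ > 0` with `‖Φ₁(h/2, Φ₂(h, Φ₁(h/2, x₀))) - Φ(h, x₀)‖ ≤ C h³` for all
`h ∈ [0, h₀]`, where `Φ₁, Φ₂, Φ` are the exact flows of `f₁`, `f₂`, `f₁+f₂`. -/
theorem strang_local_error_nonlinear {n : ℕ}
    (f₁ f₂ : (Fin n → ℝ) → (Fin n → ℝ))
    (hf₁ : ContDiff ℝ 3 f₁) (hf₂ : ContDiff ℝ 3 f₂)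
    (hb₁ : ∀ i : ℕ, i ≤ 3 → ∃ C : ℝ, ∀ x : Fin n → ℝ, ‖iteratedFDeriv ℝ i f₁ x‖ ≤ C)
    (hb₂ : ∀ i : ℕ, i ≤ 3 → ∃ C : ℝ, ∀ x : Fin n → ℝ, ‖iteratedFDeriv ℝ i f₂ x‖ ≤ C)
    (Φ₁ Φ₂ Φ : ℝ → (Fin n → ℝ) → (Fin n → ℝ))
    (hΦ₁0 : ∀ ξ, Φ₁ 0 ξ = ξ)
    (hΦ₁ : ∀ t ξ, HasDerivAt (fun s => Φ₁ s ξ) (f₁ (Φ₁ t ξ)) t)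
    (hΦ₂0 : ∀ ξ, Φ₂ 0 ξ = ξ)
    (hΦ₂ : ∀ t ξ, HasDerivAt (fun s => Φ₂ s ξ) (f₂ (Φ₂ t ξ)) t)
    (hΦ0 : ∀ ξ, Φ 0 ξ = ξ)
    (hΦ : ∀ t ξ, HasDerivAt (fun s => Φ s ξ) (f₁ (Φ t ξ) + f₂ (Φ t ξ)) t) :
    ∀ x₀ : Fin n → ℝ, ∃ C : ℝ, 0 ≤ C ∧ ∃ h₀ : ℝ, 0 < h₀ ∧
      ∀ h : ℝ, 0 ≤ h → h ≤ h₀ →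
        ‖Φ₁ (h / 2) (Φ₂ h (Φ₁ (h / 2) x₀)) - Φ h x₀‖ ≤ C * h ^ 3 := fun x₀ =>
  exists_norm_le_mul_pow_of_isBigO_nhdsGE <|
    strang_sub_flow_isBigO (hf₁.of_le (by norm_num)) (hf₂.of_le (by norm_num))
      (fun i hi => hb₁ i (by omega)) (fun i hi => hb₂ i (by omega))
      hΦ₁0 hΦ₁ hΦ₂0 hΦ₂ hΦ0 hΦ x₀
end

section
/- Let g : ℝ^{n_y} × ℝ^{n_z} → ℝ^{n_z} be continuously differentiable, let I ⊆ ℝ be an open interval, let y : I → ℝ^{n_y} be differentiable and z : I → ℝ^{n_z} be continuous, and suppose that for all t ∈ I: g(y(t), z(t)) = 0 and the partial Jacobian ∂g/∂z evaluated at (y(t), z(t)) is an invertible n_z×n_z matrix (the index-1 condition). Then z is differentiable on I, with z'(t) = −(∂g/∂z(y(t), z(t)))⁻¹ · ∂g/∂y(y(t), z(t)) · y'(t) for all t ∈ I. -/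
open Filter Topology Matrix

/-! The constraint `g(y, z) = 0` is solved near `(y(t), z(t))` by the implicit function
theorem, `z = ψ(y)` with `ψ' = -(∂g/∂z)⁻¹ ∂g/∂y`. Continuity of `z` is what forces the given
solution onto the branch `ψ` near `t`, so `z = ψ ∘ y` there and the chain rule applies. -/

namespace ContinuousLinearMap

variable {𝕜 ι : Type*} [NontriviallyNormedField 𝕜] [CompleteSpace 𝕜] [Fintype ι] [DecidableEq ι]
  {B : (ι → 𝕜) →L[𝕜] (ι → 𝕜)}

theorem isInvertible_of_isUnit_toMatrix'
    (hB : IsUnit (LinearMap.toMatrix' (B : (ι → 𝕜) →ₗ[𝕜] (ι → 𝕜)))) : B.IsInvertible := by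
  have hB_lin : IsUnit (B : (ι → 𝕜) →ₗ[𝕜] (ι → 𝕜)) := by
    simpa using hB.map (LinearMap.toMatrixAlgEquiv' (R := 𝕜) (n := ι)).symm
  obtain ⟨u, hu⟩ := isUnit_iff_isUnit_toLinearMap.mpr hB_lin
  exact ⟨ContinuousLinearEquiv.unitsEquiv 𝕜 _ u, hu⟩

theorem inverse_apply_eq_inv_toMatrix'_mulVec
    (hB : IsUnit (LinearMap.toMatrix' (B : (ι → 𝕜) →ₗ[𝕜] (ι → 𝕜)))) (v : ι → 𝕜) :
    B.inverse v = (LinearMap.toMatrix' (B : (ι → 𝕜) →ₗ[𝕜] (ι → 𝕜)))⁻¹ *ᵥ v := by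
  rw [(isInvertible_of_isUnit_toMatrix' hB).inverse_apply_eq, ← coe_coe,
    ← LinearMap.toMatrix'_mulVec, mulVec_mulVec,
    mul_nonsing_inv _ ((isUnit_iff_isUnit_det _).mp hB), one_mulVec]

end ContinuousLinearMap

namespace HasFDerivAt

variable {𝕜 E₁ E₂ F : Type*} [NontriviallyNormedField 𝕜]
  [NormedAddCommGroup E₁] [NormedSpace 𝕜 E₁] [NormedAddCommGroup E₂] [NormedSpace 𝕜 E₂]
  [NormedAddCommGroup F] [NormedSpace 𝕜 F] {f : E₁ × E₂ → F} {f' : E₁ × E₂ →L[𝕜] F}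
  {a : E₁} {b : E₂}

theorem fderiv_comp_prodMk_left (hf : HasFDerivAt f f' (a, b)) :
    fderiv 𝕜 (fun x => f (x, b)) a = f' ∘L .inl 𝕜 E₁ E₂ :=
  (hf.comp (f := fun x => (x, b)) a (hasFDerivAt_prodMk_left a b)).fderiv

theorem fderiv_comp_prodMk_right (hf : HasFDerivAt f f' (a, b)) :
    fderiv 𝕜 (fun x => f (a, x)) b = f' ∘L .inr 𝕜 E₁ E₂ :=
  (hf.comp (f := fun x => (a, x)) b (hasFDerivAt_prodMk_right a b)).fderiv

end HasFDerivAt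

section ImplicitCurve

variable {𝕜 E₁ E₂ F : Type*} [NontriviallyNormedField 𝕜]
  [NormedAddCommGroup E₁] [NormedSpace 𝕜 E₁] [CompleteSpace E₁]
  [NormedAddCommGroup E₂] [NormedSpace 𝕜 E₂] [CompleteSpace E₂]
  [NormedAddCommGroup F] [NormedSpace 𝕜 F] [CompleteSpace F]

theorem HasStrictFDerivAt.hasDerivAt_of_eventually_apply_eq {f : E₁ × E₂ → F}
    {f' : E₁ × E₂ →L[𝕜] F} {y : 𝕜 → E₁} {z : 𝕜 → E₂} {y' : E₁} {t : 𝕜}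
    (hf : HasStrictFDerivAt f f' (y t, z t)) (hf₂ : (f' ∘L .inr 𝕜 E₁ E₂).IsInvertible)
    (hy : HasDerivAt y y' t) (hz : ContinuousAt z t)
    (hyz : ∀ᶠ s in 𝓝 t, f (y s, z s) = f (y t, z t)) :
    HasDerivAt z ((-(f' ∘L .inr 𝕜 E₁ E₂).inverse ∘L (f' ∘L .inl 𝕜 E₁ E₂)) y') t := by
  have hψ := hf.hasStrictFDerivAt_implicitFunctionOfProdDomain hf₂
  have hz_eq : z =ᶠ[𝓝 t] hf.implicitFunctionOfProdDomain hf₂ ∘ y := by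
    filter_upwards [(hy.continuousAt.prodMk hz).eventually
      (hf.eventually_apply_eq_iff_implicitFunctionOfProdDomain hf₂), hyz] with s hiff hs
    exact (hiff.mp hs).symm
  exact (hψ.hasFDerivAt.comp_hasDerivAt t hy).congr_of_eventuallyEq hz_eq

end ImplicitCurve

theorem index1_algebraic_variable_differentiable_general {ny nz : ℕ}
    (g : (Fin ny → ℝ) → (Fin nz → ℝ) → Fin nz → ℝ)
    (hg : ContDiff ℝ 1 (fun p : (Fin ny → ℝ) × (Fin nz → ℝ) => g p.1 p.2))
    (I : Set ℝ) (hIopen : IsOpen I)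
    (y y' : ℝ → Fin ny → ℝ) (z : ℝ → Fin nz → ℝ)
    (hy : ∀ t ∈ I, HasDerivAt y (y' t) t)
    (hz : ContinuousOn z I)
    (hcon : ∀ t ∈ I, g (y t) (z t) = 0)
    (Gy : ℝ → Matrix (Fin nz) (Fin ny) ℝ)
    (hGy : Gy = fun t => LinearMap.toMatrix'
      (fderiv ℝ (fun η => g η (z t)) (y t) : (Fin ny → ℝ) →ₗ[ℝ] (Fin nz → ℝ)))
    (Gz : ℝ → Matrix (Fin nz) (Fin nz) ℝ)
    (hGz : Gz = fun t => LinearMap.toMatrix'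
      (fderiv ℝ (fun ζ => g (y t) ζ) (z t) : (Fin nz → ℝ) →ₗ[ℝ] (Fin nz → ℝ)))
    (hinv : ∀ t ∈ I, IsUnit (Gz t)) :
    ∀ t ∈ I, HasDerivAt z ((-((Gz t)⁻¹ * Gy t)).mulVec (y' t)) t := by
  intro t ht
  set G := fderiv ℝ (fun p : (Fin ny → ℝ) × (Fin nz → ℝ) => g p.1 p.2) (y t, z t)
  have hG : HasStrictFDerivAt _ G (y t, z t) := hg.contDiffAt.hasStrictFDerivAt one_ne_zero
  have hGy_eq : Gy t = LinearMap.toMatrix' (G ∘L .inl ℝ _ _ : (Fin ny → ℝ) →ₗ[ℝ] _) := by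
    rw [hGy, ← hG.hasFDerivAt.fderiv_comp_prodMk_left]
  have hGz_eq : Gz t = LinearMap.toMatrix' (G ∘L .inr ℝ _ _ : (Fin nz → ℝ) →ₗ[ℝ] _) := by
    rw [hGz, ← hG.hasFDerivAt.fderiv_comp_prodMk_right]
  have hGz_unit := hGz_eq ▸ hinv t ht
  have hzero : ∀ᶠ s in 𝓝 t, g (y s, z s).1 (y s, z s).2 = g (y t, z t).1 (y t, z t).2 := by
    filter_upwards [hIopen.mem_nhds ht] with s hs
    rw [hcon s hs, hcon t ht]
  have hderiv := hG.hasDerivAt_of_eventually_apply_eq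
    (ContinuousLinearMap.isInvertible_of_isUnit_toMatrix' hGz_unit) (hy t ht)
    (hz.continuousAt (hIopen.mem_nhds ht)) hzero
  have hval : (-(G ∘L .inr ℝ _ _).inverse ∘L (G ∘L .inl ℝ _ _)) (y' t)
      = (-((Gz t)⁻¹ * Gy t)) *ᵥ y' t := by
    rw [neg_mulVec, ← mulVec_mulVec, hGz_eq, hGy_eq, LinearMap.toMatrix'_mulVec,
      ← ContinuousLinearMap.inverse_apply_eq_inv_toMatrix'_mulVec hGz_unit]
    rfl
  rwa [hval] at hderiv

/-- Index-1 constraint differentiation: if `g(y(t), z(t)) = 0` on an open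
interval `I`, `y` is differentiable, `z` is continuous, and the partial
Jacobian `∂g/∂z` is invertible along the solution, then `z` is differentiable
with `z'(t) = -(∂g/∂z)⁻¹ ∂g/∂y y'(t)`. -/
theorem index1_algebraic_variable_differentiable {ny nz : ℕ}
    (g : (Fin ny → ℝ) → (Fin nz → ℝ) → Fin nz → ℝ)
    (hg : ContDiff ℝ 1 (fun p : (Fin ny → ℝ) × (Fin nz → ℝ) => g p.1 p.2))
    (I : Set ℝ) (hIopen : IsOpen I) (hIconn : I.OrdConnected)
    (y y' : ℝ → Fin ny → ℝ) (z : ℝ → Fin nz → ℝ)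
    (hy : ∀ t ∈ I, HasDerivAt y (y' t) t)
    (hz : ContinuousOn z I)
    (hcon : ∀ t ∈ I, g (y t) (z t) = 0)
    (Gy : ℝ → Matrix (Fin nz) (Fin ny) ℝ)
    (hGy : Gy = fun t => LinearMap.toMatrix'
      (fderiv ℝ (fun η => g η (z t)) (y t) : (Fin ny → ℝ) →ₗ[ℝ] (Fin nz → ℝ)))
    (Gz : ℝ → Matrix (Fin nz) (Fin nz) ℝ)
    (hGz : Gz = fun t => LinearMap.toMatrix'
      (fderiv ℝ (fun ζ => g (y t) ζ) (z t) : (Fin nz → ℝ) →ₗ[ℝ] (Fin nz → ℝ)))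
    (hinv : ∀ t ∈ I, IsUnit (Gz t)) :
    ∀ t ∈ I, HasDerivAt z ((-((Gz t)⁻¹ * Gy t)).mulVec (y' t)) t :=
  index1_algebraic_variable_differentiable_general g hg I hIopen y y' z hy hz hcon Gy hGy Gz hGz
    hinv
end
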